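/- Let c : [0,1] → M_n(ℂ) be a continuously differentiable curve of skew-Hermitian matrices and let U(t+Δ, t) be the time-ordered exponential solving U' = c(t)U, U(t,t) = 1. Then ‖U(t+Δ,t) − exp(c(t+Δ/2)·Δ)‖ ≤ C·Δ³ for a constant C depending on sup‖c‖, sup‖c'‖, sup‖c''‖: the midpoint exponential approximates the time-ordered exponential to third order locally. -/

import Mathlib

/-!
Variation of constants with respect to the constant generator `B = c m`, `m = t + Δ / 2`, gives
`U (t + Δ) t - exp (Δ • B) = ∫ₜ^{t+Δ} exp ((t + Δ - s) • B) * (c s - B) * U s t ds`.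
Replacing the integrand by its linearization `(s - m) • c' m`, whose integral over an interval
centred at `m` vanishes, costs `O(Δ²)` pointwise as soon as the propagators `U` and
`r ↦ exp (r • B)` are uniformly bounded; for a skew-Hermitian generator they are unitary.
-/

attribute [local instance] Matrix.linftyOpNormedAddCommGroup Matrix.linftyOpNormedRing
  Matrix.linftyOpNormedAlgebra

open NormedSpace Set

section RealFunctions

variable {E : Type*} [NormedAddCommGroup E] [NormedSpace ℝ E]

theorem norm_sub_le_mul_abs_of_hasDerivAt {f f' : ℝ → E} {M : ℝ}
    (hf : ∀ x, HasDerivAt f (f' x) x) (hM : ∀ x, ‖f' x‖ ≤ M) (x y : ℝ) :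
    ‖f x - f y‖ ≤ M * |x - y| := by
  simpa [Real.norm_eq_abs] using convex_univ.norm_image_sub_le_of_norm_hasDerivWithin_le
    (fun z _ => (hf z).hasDerivWithinAt) (fun z _ => hM z) (mem_univ y) (mem_univ x)

theorem norm_sub_sub_smul_le_mul_sq_of_hasDerivAt {f f' f'' : ℝ → E} {M : ℝ}
    (hf : ∀ x, HasDerivAt f (f' x) x) (hf' : ∀ x, HasDerivAt f' (f'' x) x)
    (hM : ∀ x, ‖f'' x‖ ≤ M) (x y : ℝ) :
    ‖f x - f y - (x - y) • f' y‖ ≤ M * |x - y| ^ 2 := by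
  have hM0 : 0 ≤ M := (norm_nonneg _).trans (hM 0)
  have hg : ∀ z, HasDerivAt (fun z => f z - (z - y) • f' y) (f' z - f' y) z := fun z =>
    ((hf z).sub (((hasDerivAt_id z).sub_const y).smul_const (f' y))).congr_deriv (by simp)
  have hg' : ∀ z ∈ uIcc y x, ‖f' z - f' y‖ ≤ M * |x - y| := fun z hz =>
    (norm_sub_le_mul_abs_of_hasDerivAt hf' hM z y).trans
      (mul_le_mul_of_nonneg_left (abs_sub_left_of_mem_uIcc hz) hM0)
  have := (convex_uIcc y x).norm_image_sub_le_of_norm_hasDerivWithin_le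
    (fun z _ => (hg z).hasDerivWithinAt) hg' left_mem_uIcc right_mem_uIcc
  simpa [Real.norm_eq_abs, sq, mul_assoc, sub_right_comm] using this

theorem integral_sub_midpoint_smul [CompleteSpace E] (a b : ℝ) (v : E) :
    ∫ s in a..b, (s - (a + b) / 2) • v = 0 := by
  rw [intervalIntegral.integral_smul_const, intervalIntegral.integral_comp_sub_right (fun x => x),
    integral_id]
  ring_nf
  exact zero_smul ℝ v

end RealFunctions

section BanachAlgebra

variable {𝔸 : Type*} [NormedRing 𝔸] [NormedAlgebra ℝ 𝔸] [CompleteSpace 𝔸]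

theorem norm_exp_smul_sub_one_le {B : 𝔸} {K : ℝ} (hK : ∀ r : ℝ, ‖exp (r • B)‖ ≤ K) (r : ℝ) :
    ‖exp (r • B) - 1‖ ≤ ‖B‖ * K * |r| := by
  simpa using norm_sub_le_mul_abs_of_hasDerivAt (hasDerivAt_exp_smul_const' B)
    (fun x => (norm_mul_le _ _).trans (mul_le_mul_of_nonneg_left (hK x) (norm_nonneg B))) r 0

theorem sub_exp_smul_mul_eq_integral {A W : ℝ → 𝔸} (B : 𝔸) (hA : Continuous A)
    (hW : ∀ s, HasDerivAt W (A s * W s) s) (a b : ℝ) :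
    W b - exp ((b - a) • B) * W a = ∫ s in a..b, exp ((b - s) • B) * ((A s - B) * W s) := by
  have hE : ∀ s, HasDerivAt (fun s => exp ((b - s) • B)) (-(B * exp ((b - s) • B))) s := fun s =>
    ((hasDerivAt_exp_smul_const' B (b - s)).scomp s ((hasDerivAt_id s).const_sub b)).congr_deriv
      (by simp)
  have hG : ∀ s, HasDerivAt (fun s => exp ((b - s) • B) * W s)
      (exp ((b - s) • B) * ((A s - B) * W s)) s := fun s =>
    ((hE s).mul (hW s)).congr_deriv <| by
      rw [((Commute.refl B).smul_right (b - s)).exp_right.eq]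
      noncomm_ring
  have hEc : Continuous fun s => exp ((b - s) • B) :=
    (differentiable_exp_smul_const ℝ B).continuous.comp (continuous_const.sub continuous_id)
  have hWc : Continuous W := continuous_iff_continuousAt.2 fun s => (hW s).continuousAt
  rw [intervalIntegral.integral_eq_sub_of_hasDerivAt (fun s _ => hG s)
    ((hEc.mul ((hA.sub continuous_const).mul hWc)).intervalIntegrable a b)]
  simp

theorem norm_midpoint_integrand_le {A A' A'' W : ℝ → 𝔸} {M₀ M₁ M₂ K t Δ s : ℝ}
    (hA : ∀ s, HasDerivAt A (A' s) s) (hA' : ∀ s, HasDerivAt A' (A'' s) s)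
    (hM₀ : ∀ s, ‖A s‖ ≤ M₀) (hM₁ : ∀ s, ‖A' s‖ ≤ M₁) (hM₂ : ∀ s, ‖A'' s‖ ≤ M₂)
    (hW : ∀ s, HasDerivAt W (A s * W s) s) (hWK : ∀ s, ‖W s‖ ≤ K)
    (hexpK : ∀ r : ℝ, ‖exp (r • A (t + Δ / 2))‖ ≤ K) (hWt : W t = 1)
    (hs : s ∈ Icc t (t + Δ)) :
    ‖exp ((t + Δ - s) • A (t + Δ / 2)) * ((A s - A (t + Δ / 2)) * W s)
        - (s - (t + Δ / 2)) • A' (t + Δ / 2)‖ ≤ (K ^ 2 * M₀ * M₁ + K * M₀ * M₁ + M₂) * Δ ^ 2 := by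
  set m := t + Δ / 2 with hm
  obtain ⟨hts, hsΔ⟩ := hs
  have hΔ : 0 ≤ Δ := by linarith
  have hK : 0 ≤ K := (norm_nonneg _).trans (hWK 0)
  have hM₀' : 0 ≤ M₀ := (norm_nonneg _).trans (hM₀ 0)
  have hM₁' : 0 ≤ M₁ := (norm_nonneg _).trans (hM₁ 0)
  have hM₂' : 0 ≤ M₂ := (norm_nonneg _).trans (hM₂ 0)
  have hsm : |s - m| ≤ Δ := abs_le.2 ⟨by linarith, by linarith⟩
  have hE : ‖exp ((t + Δ - s) • A m) - 1‖ ≤ M₀ * K * Δ := by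
    refine (norm_exp_smul_sub_one_le hexpK _).trans ?_
    gcongr
    · exact hM₀ m
    · exact abs_le.2 ⟨by linarith, by linarith⟩
  have hD : ‖A s - A m‖ ≤ M₁ * Δ :=
    (norm_sub_le_mul_abs_of_hasDerivAt hA hM₁ s m).trans (by gcongr)
  have hW1 : ‖W s - 1‖ ≤ M₀ * K * Δ := by
    rw [← hWt]
    refine (norm_sub_le_mul_abs_of_hasDerivAt hW (fun r => (norm_mul_le _ _).trans
      (mul_le_mul (hM₀ r) (hWK r) (norm_nonneg _) hM₀')) s t).trans ?_
    gcongr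
    exact abs_le.2 ⟨by linarith, by linarith⟩
  have hR : ‖A s - A m - (s - m) • A' m‖ ≤ M₂ * Δ ^ 2 :=
    (norm_sub_sub_smul_le_mul_sq_of_hasDerivAt hA hA' hM₂ s m).trans (by gcongr)
  calc _ = ‖(exp ((t + Δ - s) • A m) - 1) * ((A s - A m) * W s) + (A s - A m) * (W s - 1)
          + (A s - A m - (s - m) • A' m)‖ := by congr 1; noncomm_ring
    _ ≤ ‖exp ((t + Δ - s) • A m) - 1‖ * (‖A s - A m‖ * ‖W s‖) + ‖A s - A m‖ * ‖W s - 1‖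
          + ‖A s - A m - (s - m) • A' m‖ := by
        refine (norm_add₃_le).trans ?_
        gcongr
        · exact (norm_mul_le _ _).trans (by gcongr; exact norm_mul_le _ _)
        · exact norm_mul_le _ _
    _ ≤ (M₀ * K * Δ) * ((M₁ * Δ) * K) + (M₁ * Δ) * (M₀ * K * Δ) + M₂ * Δ ^ 2 := by
        gcongr
        exact hWK s
    _ = (K ^ 2 * M₀ * M₁ + K * M₀ * M₁ + M₂) * Δ ^ 2 := by ring

theorem norm_sub_exp_midpoint_le {A A' A'' W : ℝ → 𝔸} {M₀ M₁ M₂ K t Δ : ℝ}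
    (hA : ∀ s, HasDerivAt A (A' s) s) (hA' : ∀ s, HasDerivAt A' (A'' s) s)
    (hM₀ : ∀ s, ‖A s‖ ≤ M₀) (hM₁ : ∀ s, ‖A' s‖ ≤ M₁) (hM₂ : ∀ s, ‖A'' s‖ ≤ M₂)
    (hW : ∀ s, HasDerivAt W (A s * W s) s) (hWK : ∀ s, ‖W s‖ ≤ K)
    (hexpK : ∀ r : ℝ, ‖exp (r • A (t + Δ / 2))‖ ≤ K) (hWt : W t = 1) (hΔ : 0 ≤ Δ) :
    ‖W (t + Δ) - exp (Δ • A (t + Δ / 2))‖ ≤ (K ^ 2 * M₀ * M₁ + K * M₀ * M₁ + M₂) * Δ ^ 3 := by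
  set m := t + Δ / 2
  have hAc : Continuous A := continuous_iff_continuousAt.2 fun s => (hA s).continuousAt
  have hduhamel := sub_exp_smul_mul_eq_integral (A m) hAc hW t (t + Δ)
  rw [add_sub_cancel_left, hWt, mul_one] at hduhamel
  have hmid : ∫ s in t..t + Δ, (s - m) • A' m = 0 := by
    convert integral_sub_midpoint_smul t (t + Δ) (A' m) using 4; ring
  have hWc : Continuous W := continuous_iff_continuousAt.2 fun s => (hW s).continuousAt
  have hint : IntervalIntegrable (fun s => exp ((t + Δ - s) • A m) * ((A s - A m) * W s))
      MeasureTheory.volume t (t + Δ) :=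
    (((differentiable_exp_smul_const ℝ (A m)).continuous.comp
      (continuous_const.sub continuous_id)).mul
      ((hAc.sub continuous_const).mul hWc)).intervalIntegrable _ _
  calc ‖W (t + Δ) - exp (Δ • A m)‖
      = ‖∫ s in t..t + Δ, (exp ((t + Δ - s) • A m) * ((A s - A m) * W s) - (s - m) • A' m)‖ := by
        rw [intervalIntegral.integral_sub hint
          ((by fun_prop : Continuous fun s => (s - m) • A' m).intervalIntegrable _ _), hmid,
          sub_zero, hduhamel]
    _ ≤ (K ^ 2 * M₀ * M₁ + K * M₀ * M₁ + M₂) * Δ ^ 2 * |t + Δ - t| :=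
        intervalIntegral.norm_integral_le_of_norm_le_const fun s hs =>
          norm_midpoint_integrand_le hA hA' hM₀ hM₁ hM₂ hW hWK hexpK hWt
            (Ioc_subset_Icc_self (by rwa [uIoc_of_le (le_add_of_nonneg_right hΔ)] at hs))
    _ = (K ^ 2 * M₀ * M₁ + K * M₀ * M₁ + M₂) * Δ ^ 3 := by
        rw [add_sub_cancel_left, abs_of_nonneg hΔ]; ring

end BanachAlgebra

section StarAlgebra

variable {𝔸 : Type*} [NormedRing 𝔸] [NormedAlgebra ℝ 𝔸] [StarRing 𝔸] [StarModule ℝ 𝔸]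
  [ContinuousStar 𝔸]

theorem star_mul_self_eq_of_hasDerivAt_skew {A W : ℝ → 𝔸} (hskew : ∀ s, star (A s) = -A s)
    (hW : ∀ s, HasDerivAt W (A s * W s) s) (r s : ℝ) :
    star (W r) * W r = star (W s) * W s := by
  have h : ∀ x, HasDerivAt (fun x => star (W x) * W x) 0 x := fun x =>
    ((hW x).star.mul (hW x)).congr_deriv <| by rw [star_mul, hskew]; noncomm_ring
  exact is_const_of_deriv_eq_zero (fun x => (h x).differentiableAt) (fun x => (h x).deriv) r s

end StarAlgebra

-- Mathlib's `ContinuousStar` instance for matrices is stated for the product topology, which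
-- instance search does not identify with the topology of the `linfty` operator norm.
instance Matrix.linftyOp_continuousStar {m α : Type*} [Fintype m] [NormedAddCommGroup α]
    [StarAddMonoid α] [ContinuousStar α] :
    @ContinuousStar (Matrix m m α)
      Matrix.linftyOpNormedAddCommGroup.toUniformSpace.toTopologicalSpace _ :=
  ⟨continuous_id.matrix_conjTranspose⟩

theorem Matrix.linfty_opNorm_le_card_of_mem_unitaryGroup {𝕜 m : Type*} [RCLike 𝕜] [Fintype m]
    [DecidableEq m] {U : Matrix m m 𝕜} (hU : U ∈ Matrix.unitaryGroup m 𝕜) :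
    ‖U‖ ≤ Fintype.card m := by
  have hrow : ∀ i, ∑ j, ‖U i j‖₊ ≤ Fintype.card m := fun i =>
    calc ∑ j, ‖U i j‖₊ ≤ ∑ _j : m, (1 : NNReal) :=
          Finset.sum_le_sum fun j _ => entry_norm_bound_of_unitary hU i j
      _ = Fintype.card m := by simp
  rw [Matrix.linfty_opNorm_def]
  exact_mod_cast Finset.sup_le fun i _ => hrow i

/-- Let `c : ℝ → M_n(ℂ)` be a twice continuously differentiable curve of
skew-Hermitian matrices, with `‖c‖, ‖c'‖, ‖c''‖` bounded, and let `U(·, t)` solve the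
linear matrix ODE `U' = c(s)·U`, `U(t,t) = 1` (the time-ordered exponential). Then the
midpoint exponential approximates it to third order locally:
`‖U(t+Δ,t) − exp(c(t+Δ/2)·Δ)‖ ≤ C·Δ³` for a constant `C` depending on the bounds. -/
theorem midpoint_exponential_third_order
    (n : ℕ) (c : ℝ → Matrix (Fin n) (Fin n) ℂ) (hc : ContDiff ℝ 2 c)
    (hskew : ∀ t, (c t).conjTranspose = -(c t))
    (M₀ M₁ M₂ : ℝ)
    (hM₀ : ∀ t, ‖c t‖ ≤ M₀) (hM₁ : ∀ t, ‖deriv c t‖ ≤ M₁)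
    (hM₂ : ∀ t, ‖deriv (deriv c) t‖ ≤ M₂)
    (U : ℝ → ℝ → Matrix (Fin n) (Fin n) ℂ)
    (hU1 : ∀ t, U t t = 1)
    (hUderiv : ∀ t s, HasDerivAt (fun r => U r t) (c s * U s t) s) :
    ∃ C : ℝ, 0 ≤ C ∧ ∀ t Δ : ℝ, 0 < Δ →
      ‖U (t + Δ) t - NormedSpace.exp (Δ • c (t + Δ / 2))‖ ≤ C * Δ ^ 3 := by
  have hc' : ∀ s, HasDerivAt c (deriv c s) s := fun s =>
    (hc.differentiable two_ne_zero s).hasDerivAt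
  have hc'' : ∀ s, HasDerivAt (deriv c) (deriv (deriv c) s) s := fun s =>
    (hc.differentiable_deriv_two s).hasDerivAt
  have hUn : ∀ t s, ‖U s t‖ ≤ n := fun t s => by
    simpa using Matrix.linfty_opNorm_le_card_of_mem_unitaryGroup (U := U s t) <| by
      rw [Matrix.mem_unitaryGroup_iff', star_mul_self_eq_of_hasDerivAt_skew hskew (hUderiv t) s t,
        hU1, star_one, one_mul]
  have hexpn : ∀ (r : ℝ) s, ‖exp (r • c s)‖ ≤ n := fun r s => by
    have := Matrix.linfty_opNorm_le_card_of_mem_unitaryGroup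
      (exp_mem_unitary_of_mem_skewAdjoint (skewAdjoint.smul_mem r (hskew s)))
    rwa [Fintype.card_fin] at this
  have hM₀' : 0 ≤ M₀ := (norm_nonneg _).trans (hM₀ 0)
  have hM₁' : 0 ≤ M₁ := (norm_nonneg _).trans (hM₁ 0)
  have hM₂' : 0 ≤ M₂ := (norm_nonneg _).trans (hM₂ 0)
  refine ⟨n ^ 2 * M₀ * M₁ + n * M₀ * M₁ + M₂, by positivity, fun t Δ hΔ => ?_⟩
  -- elaborated without the expected type: the goal's `exp` uses the product topology on matrices
  -- and unifying it with the normed one inside the elaboration is very expensive.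
  exact (norm_sub_exp_midpoint_le hc' hc'' hM₀ hM₁ hM₂ (hUderiv t) (hUn t) (fun r => hexpn r _)
    (hU1 t) hΔ.le :)
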